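/- Let S be a finite nonempty set of primes, let k be the product of the elements of S, and let f = (X² − X)/k ∈ ℚ[X]. Let p ∈ S, let n ≥ 0 be an integer, let a ∈ ℤ, and let α ∈ ℚ̄ satisfy f^[n](α) = a. Then the minimal polynomial of α over ℚ splits into linear factors over ℚ_p, and each of its roots in ℚ_p lies in ℤ_p. -/

import Mathlib

/-!
Write `F_n` for the `n`-th iterate of `q = c⁻¹ (X² - X)`, where `‖c‖ < 1`. For `b ∈ ℤ_p`, Hensel's
lemma gives a root `z ∈ ℤ_p` of `z² - z = c b`, so `q - b = c⁻¹ (X - z)(X - (1 - z))` and hence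
`F_{n+1} - b = c⁻¹ (F_n - z)(F_n - (1 - z))`. By induction every `F_n - b` splits over `ℚ_p` with
all roots in `ℤ_p`, and so does its divisor, the minimal polynomial of `α` (with `b = a`, `c = k`).
-/

open Polynomial

namespace PadicInt

variable {p : ℕ} [Fact p.Prime]

theorem exists_sq_sub_self_eq {c : ℤ_[p]} (hc : ‖c‖ < 1) : ∃ z : ℤ_[p], z ^ 2 - z = c := by
  have hnorm : ‖(X ^ 2 - X - C c : ℤ_[p][X]).aeval (0 : ℤ_[p])‖ <
      ‖(X ^ 2 - X - C c : ℤ_[p][X]).derivative.aeval (0 : ℤ_[p])‖ ^ 2 := by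
    simpa [derivative_X_pow] using hc
  obtain ⟨z, hz, -⟩ := hensels_lemma hnorm
  exact ⟨z, by simpa [sub_eq_zero] using hz⟩

end PadicInt

namespace Polynomial

theorem aeval_iterate_comp_X {R A : Type*} [CommSemiring R] [CommSemiring A] [Algebra R A]
    (f : R[X]) (n : ℕ) (x : A) : aeval x (f.comp^[n] X) = (fun y => aeval y f)^[n] x := by
  rw [aeval_def, iterate_comp_eval₂, eval₂_X]
  rfl

theorem map_iterate_comp {R S : Type*} [Semiring R] [Semiring S] (φ : R →+* S) (f g : R[X])
    (n : ℕ) : (f.comp^[n] g).map φ = (f.map φ).comp^[n] (g.map φ) :=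
  Function.Semiconj.iterate_right (fun h => map_comp (f := φ) f h) n g

variable {p : ℕ} [Fact p.Prime]

def SplitsIntegrally (g : ℚ_[p][X]) : Prop :=
  Splits g ∧ ∀ z : ℚ_[p], g.IsRoot z → ‖z‖ ≤ 1

namespace SplitsIntegrally

theorem X_sub_C (b : ℤ_[p]) : SplitsIntegrally (X - C (b : ℚ_[p])) :=
  ⟨Splits.X_sub_C _, fun z hz => by
    rw [IsRoot, eval_sub, eval_X, eval_C, sub_eq_zero] at hz
    exact hz ▸ b.norm_le_one⟩

theorem mul {g h : ℚ_[p][X]} (hg : SplitsIntegrally g) (hh : SplitsIntegrally h) :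
    SplitsIntegrally (g * h) :=
  ⟨hg.1.mul hh.1, fun z hz => (root_mul.1 hz).elim (hg.2 z) (hh.2 z)⟩

theorem C_mul {g : ℚ_[p][X]} (hg : SplitsIntegrally g) {c : ℚ_[p]} (hc : c ≠ 0) :
    SplitsIntegrally (C c * g) :=
  ⟨hg.1.C_mul c, fun z hz => hg.2 z <| by simpa [IsRoot, hc] using hz⟩

theorem of_dvd {g h : ℚ_[p][X]} (hg : SplitsIntegrally g) (hg0 : g ≠ 0) (hhg : h ∣ g) :
    SplitsIntegrally h :=
  ⟨hg.1.of_dvd hg0 hhg, fun z hz => hg.2 z (hz.dvd hhg)⟩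

end SplitsIntegrally

theorem splitsIntegrally_iterate_comp_sub_C {c : ℤ_[p]} (hc0 : c ≠ 0) (hc : ‖c‖ < 1) (n : ℕ)
    (b : ℤ_[p]) :
    SplitsIntegrally ((C (c : ℚ_[p])⁻¹ * (X ^ 2 - X)).comp^[n] X - C (b : ℚ_[p])) := by
  induction n generalizing b with
  | zero => exact SplitsIntegrally.X_sub_C b
  | succ n ih =>
    set F := (C (c : ℚ_[p])⁻¹ * (X ^ 2 - X)).comp^[n] X
    obtain ⟨z, hz⟩ := PadicInt.exists_sq_sub_self_eq (c := c * b) <| by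
      rw [norm_mul]; exact mul_lt_one_of_nonneg_of_lt_one_left (norm_nonneg _) hc b.norm_le_one
    have hc0' : (c : ℚ_[p]) ≠ 0 := PadicInt.coe_ne_zero.2 hc0
    have hfactor : C (c : ℚ_[p])⁻¹ * (X ^ 2 - X) - C (b : ℚ_[p]) =
        C (c : ℚ_[p])⁻¹ * ((X - C (z : ℚ_[p])) * (X - C ((1 - z : ℤ_[p]) : ℚ_[p]))) := by
      have hb : (b : ℚ_[p]) = (c : ℚ_[p])⁻¹ * ((z : ℚ_[p]) ^ 2 - z) := by
        rw [← PadicInt.coe_pow, ← PadicInt.coe_sub, hz, PadicInt.coe_mul, inv_mul_cancel_left₀ hc0']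
      rw [hb]
      simp only [map_mul, map_sub, map_pow, map_one, PadicInt.coe_sub, PadicInt.coe_one]
      ring
    rw [Function.iterate_succ_apply', ← C_comp (a := (b : ℚ_[p])) (p := F), ← sub_comp,
      hfactor, mul_comp, mul_comp, C_comp, sub_comp, sub_comp, X_comp, C_comp, C_comp]
    exact ((ih z).mul (ih (1 - z))).C_mul (inv_ne_zero hc0')

end Polynomial

theorem stmt_12_general (S : Finset ℕ) (hSprime : ∀ q ∈ S, q.Prime)
    (k : ℕ) (hk : k = ∏ q ∈ S, q)
    (f : Polynomial ℚ) (hf : f = C ((k : ℚ))⁻¹ * (X ^ 2 - X))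
    (p : ℕ) [Fact p.Prime] (hp : p ∈ S)
    (n : ℕ) (a : ℤ) (α : AlgebraicClosure ℚ)
    (hα : (fun x : AlgebraicClosure ℚ => aeval x f)^[n] α = (a : AlgebraicClosure ℚ)) :
    Splits ((minpoly ℚ α).map (algebraMap ℚ ℚ_[p])) ∧
    ∀ z : ℚ_[p], aeval z (minpoly ℚ α) = 0 → ‖z‖ ≤ 1 := by
  have hk0 : k ≠ 0 := hk ▸ Finset.prod_ne_zero_iff.2 fun q hq => (hSprime q hq).ne_zero
  have hpk : p ∣ k := hk ▸ Finset.dvd_prod_of_mem _ hp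
  set G : ℚ[X] := f.comp^[n] X - C (a : ℚ)
  have hG : aeval α G = 0 := by
    rw [map_sub, aeval_iterate_comp_X, hα, aeval_C, map_intCast, sub_self]
  have hG0 : G ≠ 0 := by
    have hf2 : f.natDegree = 2 := by
      rw [hf, natDegree_C_mul (by simpa using hk0)]
      compute_degree!
    refine ne_zero_of_natDegree_gt (n := 0) ?_
    rw [natDegree_sub_C, natDegree_iterate_comp, hf2, natDegree_X]
    positivity
  have hGp : SplitsIntegrally (G.map (algebraMap ℚ ℚ_[p])) := by
    convert splitsIntegrally_iterate_comp_sub_C (c := (k : ℤ_[p])) (by simpa using hk0)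
      (PadicInt.norm_natCast_lt_one_iff.2 hpk) n a using 2
    rw [Polynomial.map_sub, map_iterate_comp, hf]
    simp
  obtain ⟨hsplit, hroots⟩ := hGp.of_dvd (map_ne_zero hG0) (map_dvd _ (minpoly.dvd ℚ α hG))
  exact ⟨hsplit, fun z hz => hroots z (by rwa [IsRoot, eval_map_algebraMap])⟩

/-- Example 3.6 (key computation): let `S` be a finite nonempty set of primes, `k` their
product, and `f = (X² − X)/k ∈ ℚ[X]`.  If `p ∈ S` and `α ∈ ℚ̄` satisfies `f^[n](α) = a` for
some integer `a` and some `n ≥ 0`, then the minimal polynomial of `α` over `ℚ` splits into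
linear factors over `ℚ_p`, and all of its roots in `ℚ_p` are `p`-adic integers. -/
theorem stmt_12 (S : Finset ℕ) (hSprime : ∀ q ∈ S, q.Prime) (hSne : S.Nonempty)
    (k : ℕ) (hk : k = ∏ q ∈ S, q)
    (f : Polynomial ℚ) (hf : f = C ((k : ℚ))⁻¹ * (X ^ 2 - X))
    (p : ℕ) [Fact p.Prime] (hp : p ∈ S)
    (n : ℕ) (a : ℤ) (α : AlgebraicClosure ℚ)
    (hα : (fun x : AlgebraicClosure ℚ => aeval x f)^[n] α = (a : AlgebraicClosure ℚ)) :
    Splits ((minpoly ℚ α).map (algebraMap ℚ ℚ_[p])) ∧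
    ∀ z : ℚ_[p], aeval z (minpoly ℚ α) = 0 → ‖z‖ ≤ 1 :=
  stmt_12_general S hSprime k hk f hf p hp n a α hα
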